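/- arXiv:0904.3344 — 2 statements merged into one kernel-verified Lean document; each statement's English description precedes it below -/
import Mathlib

section
/- In ℚ[[z]], φ_3(1/((1 - z^2)(1 - z^4)^2 (1 - z^6))) = (z^6 + 5 z^4 + 2 z^2 + 1)/((1 - z^2)^2 (1 - z^4)^2), where φ_3(∑ a_i z^i) = ∑ a_{3i} z^i. -/
open PowerSeries

/-- `φ_n(∑ a_i z^i) = ∑ a_{in} z^i`. -/
noncomputable def phi (n : ℕ) (f : PowerSeries ℚ) : PowerSeries ℚ :=
  PowerSeries.mk fun i => PowerSeries.coeff (i * n) f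

/-- Expansion by 3: `f(z) ↦ f(z^3)`. -/
noncomputable def ex3 (f : PowerSeries ℚ) : PowerSeries ℚ :=
  PowerSeries.mk fun n => if 3 ∣ n then PowerSeries.coeff (n / 3) f else 0

lemma coeff_ex3 (n : ℕ) (f : PowerSeries ℚ) :
    PowerSeries.coeff n (ex3 f) =
      if 3 ∣ n then PowerSeries.coeff (n / 3) f else 0 :=
  PowerSeries.coeff_mk _ _

lemma sum_range_mul3 {M : Type*} [AddCommMonoid M] (m : ℕ) (h : ℕ → M)
    (hz : ∀ k, k ≤ 3 * m → ¬ 3 ∣ k → h k = 0) :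
    ∑ k ∈ Finset.range (3 * m + 1), h k = ∑ j ∈ Finset.range (m + 1), h (3 * j) := by
  rw [← Finset.sum_filter_of_ne (p := fun k => 3 ∣ k)
    (fun x hx hxne => by
      by_contra hc
      exact hxne (hz x (by simpa using Nat.lt_succ_iff.mp (Finset.mem_range.mp hx)) hc))]
  have himg : (Finset.range (3 * m + 1)).filter (fun k => 3 ∣ k) =
      (Finset.range (m + 1)).image (fun j => 3 * j) := by
    ext k
    simp only [Finset.mem_filter, Finset.mem_range, Finset.mem_image]
    constructor
    · rintro ⟨hk, c, rfl⟩
      exact ⟨c, by omega, rfl⟩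
    · rintro ⟨j, hj, rfl⟩
      exact ⟨by omega, j, rfl⟩
  rw [himg, Finset.sum_image (fun a _ b _ hab => by omega)]

lemma ex3_mul (f g : PowerSeries ℚ) : ex3 (f * g) = ex3 f * ex3 g := by
  ext n
  by_cases h : 3 ∣ n
  · obtain ⟨m, rfl⟩ := h
    rw [coeff_ex3, if_pos ⟨m, rfl⟩, Nat.mul_div_cancel_left m (by norm_num),
      PowerSeries.coeff_mul, PowerSeries.coeff_mul,
      Finset.Nat.sum_antidiagonal_eq_sum_range_succ_mk,
      Finset.Nat.sum_antidiagonal_eq_sum_range_succ_mk,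
      sum_range_mul3 m _ (fun k hk hk3 => by rw [coeff_ex3, if_neg hk3, zero_mul])]
    refine Finset.sum_congr rfl fun j hj => ?_
    have hj' : j ≤ m := by simpa using Nat.lt_succ_iff.mp (Finset.mem_range.mp hj)
    rw [coeff_ex3, coeff_ex3, if_pos ⟨j, rfl⟩,
      show 3 * m - 3 * j = 3 * (m - j) by omega, if_pos ⟨m - j, rfl⟩,
      Nat.mul_div_cancel_left j (by norm_num), Nat.mul_div_cancel_left (m - j) (by norm_num)]
  · rw [coeff_ex3, if_neg h, PowerSeries.coeff_mul,
      Finset.Nat.sum_antidiagonal_eq_sum_range_succ_mk]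
    refine (Finset.sum_eq_zero fun k hk => ?_).symm
    have hk' : k ≤ n := by simpa using Nat.lt_succ_iff.mp (Finset.mem_range.mp hk)
    by_cases h3 : 3 ∣ k
    · rw [coeff_ex3 (n - k), if_neg (by omega), mul_zero]
    · rw [coeff_ex3 k, if_neg h3, zero_mul]

lemma ex3_one : ex3 1 = 1 := by
  ext n
  rw [coeff_ex3]
  simp only [PowerSeries.coeff_one]
  split_ifs <;> first | rfl | omega

lemma ex3_pow (f : PowerSeries ℚ) (k : ℕ) : ex3 (f ^ k) = ex3 f ^ k := by
  induction k with
  | zero => simpa using ex3_one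
  | succ k ih => rw [pow_succ, pow_succ, ex3_mul, ih]

lemma ex3_add (f g : PowerSeries ℚ) : ex3 (f + g) = ex3 f + ex3 g := by
  ext n
  rw [map_add, coeff_ex3, coeff_ex3, coeff_ex3]
  split_ifs <;> simp

lemma ex3_sub (f g : PowerSeries ℚ) : ex3 (f - g) = ex3 f - ex3 g := by
  ext n
  rw [map_sub, coeff_ex3, coeff_ex3, coeff_ex3]
  split_ifs <;> simp

lemma ex3_X_pow (k : ℕ) : ex3 ((X : PowerSeries ℚ) ^ k) = X ^ (3 * k) := by
  ext n
  rw [coeff_ex3]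
  simp only [PowerSeries.coeff_X_pow]
  split_ifs <;> first | rfl | omega

lemma ex3_X : ex3 (X : PowerSeries ℚ) = X ^ 3 := by
  simpa using ex3_X_pow 1

lemma phi3_one : phi 3 (1 : PowerSeries ℚ) = 1 := by
  ext i
  rw [phi, PowerSeries.coeff_mk]
  simp only [PowerSeries.coeff_one]
  split_ifs <;> first | rfl | omega

lemma phi3_X : phi 3 (X : PowerSeries ℚ) = 0 := by
  ext i
  rw [phi, PowerSeries.coeff_mk]
  simp only [PowerSeries.coeff_X, map_zero]
  split_ifs <;> first | rfl | omega

lemma phi3_X_sq : phi 3 ((X : PowerSeries ℚ) ^ 2) = 0 := by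
  ext i
  rw [phi, PowerSeries.coeff_mk]
  simp only [PowerSeries.coeff_X_pow, map_zero]
  split_ifs <;> first | rfl | omega

lemma phi3_add (f g : PowerSeries ℚ) : phi 3 (f + g) = phi 3 f + phi 3 g := by
  ext i
  simp [phi, PowerSeries.coeff_mk]

lemma phi3_mul_ex3 (f g : PowerSeries ℚ) : phi 3 (f * ex3 g) = phi 3 f * g := by
  ext i
  rw [phi, PowerSeries.coeff_mk, PowerSeries.coeff_mul, PowerSeries.coeff_mul,
    Finset.Nat.sum_antidiagonal_eq_sum_range_succ_mk,
    Finset.Nat.sum_antidiagonal_eq_sum_range_succ_mk,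
    show i * 3 = 3 * i by ring,
    sum_range_mul3 i _ (fun k hk hk3 => by
      rw [coeff_ex3, if_neg (by omega), mul_zero])]
  refine Finset.sum_congr rfl fun j hj => ?_
  have hj' : j ≤ i := by simpa using Nat.lt_succ_iff.mp (Finset.mem_range.mp hj)
  rw [coeff_ex3, show 3 * i - 3 * j = 3 * (i - j) by omega, if_pos ⟨i - j, rfl⟩,
    Nat.mul_div_cancel_left (i - j) (by norm_num), phi, PowerSeries.coeff_mk,
    show 3 * j = j * 3 by ring]

/-- `φ_3(1/((1-z^2)(1-z^4)^2(1-z^6))) = (z^6 + 5z^4 + 2z^2 + 1)/((1-z^2)^2 (1-z^4)^2)`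
in `ℚ[[z]]`. -/
theorem phi3_PI13 :
    phi 3 (((1 - X ^ 2) * (1 - X ^ 4) ^ 2 * (1 - X ^ 6) : PowerSeries ℚ)⁻¹) =
      (X ^ 6 + 5 * X ^ 4 + 2 * X ^ 2 + 1) * (((1 - X ^ 2) ^ 2 * (1 - X ^ 4) ^ 2))⁻¹ := by
  set F : PowerSeries ℚ := (1 - X ^ 2) ^ 2 * (1 - X ^ 4) ^ 2 with hFdef
  set D1 : PowerSeries ℚ := (1 - X ^ 2) * (1 - X ^ 4) ^ 2 * (1 - X ^ 6) with hD1def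
  have hFc : PowerSeries.constantCoeff F ≠ 0 := by
    rw [hFdef]
    simp [map_mul, map_pow, map_sub]
  have hD1c : PowerSeries.constantCoeff D1 ≠ 0 := by
    rw [hD1def]
    simp [map_mul, map_pow, map_sub]
  have hex3F : ex3 F = (1 - X ^ 6) ^ 2 * (1 - X ^ 12) ^ 2 := by
    rw [hFdef, ex3_mul, ex3_pow, ex3_pow, ex3_sub, ex3_sub, ex3_one,
      ex3_X_pow, ex3_X_pow]
  set Num : PowerSeries ℚ := (1 + X ^ 2 + X ^ 4) * (1 + X ^ 4 + X ^ 8) ^ 2 with hNumdef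
  have hDN : D1 * Num = ex3 F := by
    rw [hex3F, hD1def, hNumdef]; ring
  have hg : D1⁻¹ = Num * ex3 F⁻¹ := by
    symm
    rw [PowerSeries.eq_inv_iff_mul_eq_one hD1c]
    calc Num * ex3 F⁻¹ * D1 = (D1 * Num) * ex3 F⁻¹ := by ring
    _ = ex3 F * ex3 F⁻¹ := by rw [hDN]
    _ = ex3 (F * F⁻¹) := (ex3_mul _ _).symm
    _ = 1 := by rw [PowerSeries.mul_inv_cancel F hFc, ex3_one]
  -- decompose Num by residues mod 3
  have hA0 : ex3 ((1 : PowerSeries ℚ) + X ^ 2 + X ^ 2 + (X ^ 4 + X ^ 4 + X ^ 4 + X ^ 4 + X ^ 4)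
      + X ^ 6) = 1 + X ^ 6 + X ^ 6 + (X ^ 12 + X ^ 12 + X ^ 12 + X ^ 12 + X ^ 12) + X ^ 18 := by
    rw [ex3_add, ex3_add, ex3_add, ex3_add, ex3_add, ex3_add, ex3_add, ex3_add, ex3_one]
    simp [ex3_X_pow]
  have hA1 : ex3 ((X : PowerSeries ℚ) ^ 1 + X ^ 1 + X ^ 1 + (X ^ 3 + X ^ 3 + X ^ 3)
      + (X ^ 5 + X ^ 5 + X ^ 5)) = X ^ 3 + X ^ 3 + X ^ 3 + (X ^ 9 + X ^ 9 + X ^ 9)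
      + (X ^ 15 + X ^ 15 + X ^ 15) := by
    rw [ex3_add, ex3_add, ex3_add, ex3_add, ex3_add, ex3_add, ex3_add, ex3_add]
    simp [ex3_X_pow, ex3_X]
  have hA2 : ex3 ((1 : PowerSeries ℚ) + (X ^ 2 + X ^ 2 + X ^ 2 + X ^ 2 + X ^ 2)
      + (X ^ 4 + X ^ 4) + X ^ 6) = 1 + (X ^ 6 + X ^ 6 + X ^ 6 + X ^ 6 + X ^ 6)
      + (X ^ 12 + X ^ 12) + X ^ 18 := by
    rw [ex3_add, ex3_add, ex3_add, ex3_add, ex3_add, ex3_add, ex3_add, ex3_add, ex3_one]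
    simp [ex3_X_pow]
  set A0 : PowerSeries ℚ := 1 + 2 * X ^ 2 + 5 * X ^ 4 + X ^ 6 with hA0def
  set A1 : PowerSeries ℚ := 3 * X + 3 * X ^ 3 + 3 * X ^ 5 with hA1def
  set A2 : PowerSeries ℚ := 1 + 5 * X ^ 2 + 2 * X ^ 4 + X ^ 6 with hA2def
  have hNumsplit : Num = ex3 A0 + X * ex3 A1 + X ^ 2 * ex3 A2 := by
    rw [hA0def, hA1def, hA2def,
      show (1 : PowerSeries ℚ) + 2 * X ^ 2 + 5 * X ^ 4 + X ^ 6 =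
        1 + X ^ 2 + X ^ 2 + (X ^ 4 + X ^ 4 + X ^ 4 + X ^ 4 + X ^ 4) + X ^ 6 by ring,
      show (3 : PowerSeries ℚ) * X + 3 * X ^ 3 + 3 * X ^ 5 =
        X ^ 1 + X ^ 1 + X ^ 1 + (X ^ 3 + X ^ 3 + X ^ 3) + (X ^ 5 + X ^ 5 + X ^ 5) by ring,
      show (1 : PowerSeries ℚ) + 5 * X ^ 2 + 2 * X ^ 4 + X ^ 6 =
        1 + (X ^ 2 + X ^ 2 + X ^ 2 + X ^ 2 + X ^ 2) + (X ^ 4 + X ^ 4) + X ^ 6 by ring,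
      hA0, hA1, hA2, hNumdef]
    ring
  rw [hg, hNumsplit,
    show (ex3 A0 + X * ex3 A1 + X ^ 2 * ex3 A2) * ex3 F⁻¹ =
      1 * (ex3 A0 * ex3 F⁻¹) + X * (ex3 A1 * ex3 F⁻¹) + X ^ 2 * (ex3 A2 * ex3 F⁻¹) by ring,
    ← ex3_mul, ← ex3_mul, ← ex3_mul, phi3_add, phi3_add,
    phi3_mul_ex3, phi3_mul_ex3, phi3_mul_ex3, phi3_one, phi3_X, phi3_X_sq]
  rw [hA0def]
  ring
end

section
/- For n ≥ 1 and k_1, …, k_m ≥ 1, φ_n maps the set of rational power series with denominator ∏(1 - z^{k_i}) to rational power series with the same denominator; in particular the Poincaré series obtained as finite sums of terms φ_j(P(z)/∏(1-z^{k_i})) for polynomials P are rational functions. -/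
open PowerSeries

lemma phi_mul_one_sub (n kk : ℕ) (hn : 1 ≤ n) (f : PowerSeries ℚ) :
    phi n (f * (1 - X ^ (n * kk))) = phi n f * (1 - X ^ kk) := by
  ext i
  simp only [phi, mul_sub, mul_one, map_sub, coeff_mk,
    PowerSeries.coeff_mul_X_pow']
  congr 1
  by_cases h : kk ≤ i
  · have h' : n * kk ≤ i * n := by
      rw [mul_comm n kk]; exact Nat.mul_le_mul_right n h
    rw [if_pos h, if_pos h', Nat.sub_mul, mul_comm kk n]
  · have h' : ¬ n * kk ≤ i * n := by
      rw [mul_comm n kk]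
      intro hc
      exact h (Nat.le_of_mul_le_mul_right hc hn)
    rw [if_neg h, if_neg h']

lemma phi_mul_prod (n : ℕ) (hn : 1 ≤ n) {m : ℕ} (k : Fin m → ℕ)
    (s : Finset (Fin m)) (f : PowerSeries ℚ) :
    phi n (f * ∏ i ∈ s, (1 - X ^ (n * k i))) = phi n f * ∏ i ∈ s, (1 - X ^ (k i)) := by
  induction s using Finset.induction generalizing f with
  | empty => simp
  | insert a s ha ih =>
      rw [Finset.prod_insert ha, Finset.prod_insert ha, ← mul_assoc,
        ih (f * (1 - X ^ (n * k _))), phi_mul_one_sub n _ hn, mul_assoc,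
        mul_comm (1 - X ^ k _), ← mul_assoc]

lemma phi_poly (n : ℕ) (hn : 1 ≤ n) (P : Polynomial ℚ) :
    ∃ Q : Polynomial ℚ, phi n (P : PowerSeries ℚ) = (Q : PowerSeries ℚ) := by
  refine ⟨trunc (P.natDegree + 1) (phi n (P : PowerSeries ℚ)), ?_⟩
  ext i
  rw [Polynomial.coeff_coe, coeff_trunc]
  split
  · rfl
  · next h =>
      have hi : P.natDegree < i := by omega
      have : P.natDegree < i * n := lt_of_lt_of_le hi (Nat.le_mul_of_pos_right i hn)
      simp [phi, Polynomial.coeff_coe, Polynomial.coeff_eq_zero_of_natDegree_lt this]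

/-- For `n ≥ 1` and `k_1,…,k_m ≥ 1`, `φ_n` maps rational power series with denominator
`∏ (1 - z^{k_i})` to rational power series with the same denominator: for every
polynomial numerator `P` there is a polynomial `Q` with
`φ_n(P/∏(1-z^{k_i})) = Q/∏(1-z^{k_i})`.  In particular, finite sums of such terms
(such as the Poincaré series) are rational functions. -/
theorem phi_preserves_rational (n m : ℕ) (hn : 1 ≤ n) (k : Fin m → ℕ) (hk : ∀ i, 1 ≤ k i) :
    ∀ P : Polynomial ℚ, ∃ Q : Polynomial ℚ,
      phi n ((P : PowerSeries ℚ) * ((∏ i, (1 - (X : PowerSeries ℚ) ^ k i)))⁻¹) =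
        (Q : PowerSeries ℚ) * ((∏ i, (1 - (X : PowerSeries ℚ) ^ k i)))⁻¹ := by
  intro P
  set S : PowerSeries ℚ := ∏ i, (1 - (X : PowerSeries ℚ) ^ k i) with hSdef
  have hS : constantCoeff S = 1 := by
    rw [hSdef, map_prod]
    refine Finset.prod_eq_one fun i _ => ?_
    have : (k i) ≠ 0 := by have := hk i; omega
    simp [this]
  have hSunit : S * S⁻¹ = 1 := PowerSeries.mul_inv_cancel _ (by rw [hS]; exact one_ne_zero)
  set Cp : Polynomial ℚ := ∏ i, ∑ j ∈ Finset.range n, Polynomial.X ^ (k i * j) with hCp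
  have hCpcoe : (Cp : PowerSeries ℚ) = ∏ i, ∑ j ∈ Finset.range n, (X : PowerSeries ℚ) ^ (k i * j) := by
    rw [hCp, ← Polynomial.coeToPowerSeries.ringHom_apply, map_prod]
    refine Finset.prod_congr rfl fun i _ => ?_
    rw [map_sum]
    refine Finset.sum_congr rfl fun j _ => ?_
    rw [map_pow, Polynomial.coeToPowerSeries.ringHom_apply, Polynomial.coe_X]
  have hST : S * (Cp : PowerSeries ℚ) = ∏ i, (1 - (X : PowerSeries ℚ) ^ (n * k i)) := by
    rw [hCpcoe, hSdef, ← Finset.prod_mul_distrib]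
    refine Finset.prod_congr rfl fun i _ => ?_
    have hg := geom_sum_mul ((X : PowerSeries ℚ) ^ k i) n
    have : ∀ j, ((X : PowerSeries ℚ) ^ k i) ^ j = X ^ (k i * j) := fun j => by
      rw [← pow_mul]
    calc (1 - (X : PowerSeries ℚ) ^ k i) * ∑ j ∈ Finset.range n, (X:PowerSeries ℚ) ^ (k i * j)
        = -((∑ j ∈ Finset.range n, ((X:PowerSeries ℚ) ^ k i) ^ j) * ((X:PowerSeries ℚ) ^ k i - 1)) := by
          simp only [this]; ring
      _ = 1 - (X : PowerSeries ℚ) ^ (n * k i) := by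
          rw [hg, ← pow_mul, mul_comm (k i) n]; ring
  have key := phi_mul_prod n hn k Finset.univ ((P : PowerSeries ℚ) * S⁻¹)
  rw [← hST] at key
  have harr : (P : PowerSeries ℚ) * S⁻¹ * (S * (Cp : PowerSeries ℚ))
      = ((P * Cp : Polynomial ℚ) : PowerSeries ℚ) := by
    rw [Polynomial.coe_mul]
    calc (P : PowerSeries ℚ) * S⁻¹ * (S * (Cp : PowerSeries ℚ))
        = (P : PowerSeries ℚ) * (Cp : PowerSeries ℚ) * (S * S⁻¹) := by ring
      _ = (P : PowerSeries ℚ) * (Cp : PowerSeries ℚ) := by rw [hSunit, mul_one]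
  rw [harr] at key
  obtain ⟨Q, hQ⟩ := phi_poly n hn (P * Cp)
  refine ⟨Q, ?_⟩
  calc phi n ((P : PowerSeries ℚ) * S⁻¹)
      = phi n ((P : PowerSeries ℚ) * S⁻¹) * (S * S⁻¹) := by rw [hSunit, mul_one]
    _ = (phi n ((P : PowerSeries ℚ) * S⁻¹) * S) * S⁻¹ := by ring
    _ = (Q : PowerSeries ℚ) * S⁻¹ := by rw [← key, hQ]
end
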